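/- arXiv:0807.1496 — 4 statements merged into one kernel-verified Lean document; each statement's English description precedes it below -/
import Mathlib

section
/- Let X_1, ..., X_n be 0-1 valued random variables such that for every subset S of indices, E[∏_{i∈S} X_i] ≤ ∏_{i∈S} E[X_i] (negative correlation). Then for every λ > 0, E[exp(λ ∑_{i=1}^n X_i)] ≤ ∏_{i=1}^n E[exp(λ X_i)]. -/
/-!
For a 0-1 variable, `exp (l * x) = 1 + c * x` with `c = exp l - 1 ≥ 0`. Hence both sides of the
inequality are polynomials in `c` with nonnegative coefficients: expanding the products, the
coefficient of `c ^ #S` is `E[∏_{i ∈ S} Xᵢ]` on the left and `∏_{i ∈ S} E[Xᵢ]` on the right, so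
negative correlation compares them term by term.
-/

open MeasureTheory Finset

theorem Finset.prod_one_add_mul {ι R : Type*} [CommSemiring R] (c : R) (f : ι → R)
    (s : Finset ι) :
    ∏ i ∈ s, (1 + c * f i) = ∑ t ∈ s.powerset, c ^ #t * ∏ i ∈ t, f i := by
  simp only [prod_one_add, prod_mul_distrib, prod_const]

theorem Real.exp_mul_of_eq_zero_or_eq_one (l : ℝ) {x : ℝ} (hx : x = 0 ∨ x = 1) :
    Real.exp (l * x) = 1 + (Real.exp l - 1) * x := by
  rcases hx with rfl | rfl <;> simp

section

variable {ι Ω : Type*} [MeasurableSpace Ω] {μ : Measure Ω} {X : ι → Ω → ℝ}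

theorem integrable_prod_of_norm_le_one [IsFiniteMeasure μ]
    (hX : ∀ i, AEStronglyMeasurable (X i) μ) (hX1 : ∀ i ω, ‖X i ω‖ ≤ 1) (s : Finset ι) :
    Integrable (fun ω => ∏ i ∈ s, X i ω) μ :=
  .of_bound (Finset.aestronglyMeasurable_fun_prod s fun i _ => hX i) 1 <| .of_forall fun ω => by
    rw [norm_prod]
    exact prod_le_one (fun i _ => norm_nonneg _) fun i _ => hX1 i ω

theorem integral_prod_one_add_mul_le_of_negCorr (s : Finset ι)
    (hint : ∀ t ⊆ s, Integrable (fun ω => ∏ i ∈ t, X i ω) μ)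
    (hneg : ∀ t ⊆ s, ∫ ω, ∏ i ∈ t, X i ω ∂μ ≤ ∏ i ∈ t, ∫ ω, X i ω ∂μ) {c : ℝ} (hc : 0 ≤ c) :
    ∫ ω, ∏ i ∈ s, (1 + c * X i ω) ∂μ ≤ ∏ i ∈ s, (1 + c * ∫ ω, X i ω ∂μ) := by
  simp_rw [prod_one_add_mul]
  rw [integral_finsetSum _ fun t ht => (hint t (mem_powerset.1 ht)).const_mul _]
  refine sum_le_sum fun t ht => ?_
  rw [integral_const_mul]
  exact mul_le_mul_of_nonneg_left (hneg t (mem_powerset.1 ht)) (pow_nonneg hc _)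

theorem integral_one_add_mul [IsProbabilityMeasure μ] {f : Ω → ℝ} (hf : Integrable f μ) (c : ℝ) :
    ∫ ω, 1 + c * f ω ∂μ = 1 + c * ∫ ω, f ω ∂μ := by
  rw [integral_add (integrable_const 1) (hf.const_mul c), integral_const, integral_const_mul]
  simp

end

/-- Negatively correlated 0-1 random variables satisfy the exponential moment
inequality: `E[exp(λ ∑ Xᵢ)] ≤ ∏ E[exp(λ Xᵢ)]` for every `λ > 0`. -/
theorem negCorr_exp_moment
    {Ω : Type*} [MeasurableSpace Ω] (μ : Measure Ω) [IsProbabilityMeasure μ]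
    (n : ℕ) (X : Fin n → Ω → ℝ)
    (hmeas : ∀ i, Measurable (X i))
    (h01 : ∀ i ω, X i ω = 0 ∨ X i ω = 1)
    (hneg : ∀ S : Finset (Fin n),
      (∫ ω, ∏ i ∈ S, X i ω ∂μ) ≤ ∏ i ∈ S, ∫ ω, X i ω ∂μ)
    (l : ℝ) (hl : 0 < l) :
    (∫ ω, Real.exp (l * ∑ i, X i ω) ∂μ) ≤ ∏ i, ∫ ω, Real.exp (l * X i ω) ∂μ := by
  have hexp i ω : Real.exp (l * X i ω) = 1 + (Real.exp l - 1) * X i ω :=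
    Real.exp_mul_of_eq_zero_or_eq_one l (h01 i ω)
  have hint : ∀ t : Finset (Fin n), Integrable (fun ω => ∏ i ∈ t, X i ω) μ :=
    integrable_prod_of_norm_le_one (fun i => (hmeas i).aestronglyMeasurable)
      fun i ω => by rcases h01 i ω with h | h <;> simp [h]
  calc ∫ ω, Real.exp (l * ∑ i, X i ω) ∂μ
      = ∫ ω, ∏ i, (1 + (Real.exp l - 1) * X i ω) ∂μ := by simp_rw [mul_sum, Real.exp_sum, hexp]
    _ ≤ ∏ i, (1 + (Real.exp l - 1) * ∫ ω, X i ω ∂μ) :=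
      integral_prod_one_add_mul_le_of_negCorr _ (fun t _ => hint t) (fun t _ => hneg t)
        (sub_nonneg.2 (Real.one_le_exp hl.le))
    _ = ∏ i, ∫ ω, Real.exp (l * X i ω) ∂μ := by
      refine prod_congr rfl fun i _ => ?_
      simp_rw [hexp, integral_one_add_mul (by simpa using hint {i})]
end

section
/- Let X_1, ..., X_n be 0-1 random variables such that both {X_i} and {1 - X_i} are negatively correlated families, with p_i = P[X_i = 1] and p = (1/n)∑ p_i. Then for every λ > 0, P[∑_{i=1}^n X_i < pn - λ] ≤ exp(-λ²/(2pn)). -/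
/-! For `x ∈ {0, 1}` one has `exp (-t x) = (1 - e⁻ᵗ) (1 - x) + e⁻ᵗ`, so `exp (-t ∑ Xᵢ)` is a product
of affine functions of the `1 - Xᵢ`. Expanding it over subsets, negative correlation of `{1 - Xᵢ}`
bounds every term by its value for independent variables, whence
`E[exp (-t ∑ Xᵢ)] ≤ ∏ (1 - (1 - e⁻ᵗ) pᵢ) ≤ exp (-(1 - e⁻ᵗ) p n)`. The Chernoff bound at
`t = λ / (p n)`, with `1 - e⁻ᵗ ≥ t - t² / 2`, gives the claim. -/

open MeasureTheory ProbabilityTheory Finset Real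

theorem Real.sub_sq_div_two_le_one_sub_exp_neg {t : ℝ} (ht : 0 ≤ t) :
    t - t ^ 2 / 2 ≤ 1 - exp (-t) := by
  suffices exp (-t) ≤ 1 - t + t ^ 2 / 2 by linarith
  have h := quadratic_le_exp_of_nonneg ht
  rw [exp_neg, inv_eq_one_div, div_le_iff₀ (exp_pos t)]
  nlinarith [exp_pos t, sq_nonneg (t ^ 2)]

theorem Real.exp_neg_mul_of_eq_zero_or_one {x : ℝ} (hx : x = 0 ∨ x = 1) (t : ℝ) :
    exp (-t * x) = (1 - exp (-t)) * (1 - x) + exp (-t) := by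
  rcases hx with rfl | rfl <;> simp

theorem chernoff_exponent_le {a lam : ℝ} (ha : 0 < a) (hlam : 0 ≤ lam) :
    lam / a * (a - lam) - (1 - exp (-(lam / a))) * a ≤ -lam ^ 2 / (2 * a) := by
  have h := Real.sub_sq_div_two_le_one_sub_exp_neg (div_nonneg hlam ha.le)
  calc lam / a * (a - lam) - (1 - exp (-(lam / a))) * a
      ≤ lam / a * (a - lam) - (lam / a - (lam / a) ^ 2 / 2) * a := by gcongr
    _ = -lam ^ 2 / (2 * a) := by field_simp; ring

theorem Finset.prod_mul_add_eq_sum_powerset {ι R : Type*} [CommSemiring R] [DecidableEq ι]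
    (s : Finset ι) (d c : R) (y : ι → R) :
    ∏ i ∈ s, (d * y i + c) = ∑ T ∈ s.powerset, d ^ #T * c ^ #(s \ T) * ∏ i ∈ T, y i := by
  rw [prod_add]
  refine sum_congr rfl fun T _ => ?_
  rw [prod_const, prod_mul_distrib, prod_const]
  ring

section

variable {ι Ω : Type*} [MeasurableSpace Ω] {μ : Measure Ω}

theorem integrable_prod_of_abs_le_one [IsFiniteMeasure μ] {Y : ι → Ω → ℝ}
    (hmeas : ∀ i, Measurable (Y i)) (hY : ∀ i ω, |Y i ω| ≤ 1) (T : Finset ι) :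
    Integrable (fun ω => ∏ i ∈ T, Y i ω) μ := by
  refine .of_bound (Finset.measurable_prod T fun i _ => hmeas i).aestronglyMeasurable 1
    (.of_forall fun ω => ?_)
  rw [Real.norm_eq_abs, abs_prod]
  exact prod_le_one (fun i _ => abs_nonneg _) fun i _ => hY i ω

theorem integral_prod_mul_add_le_of_negCorr [Fintype ι] {Y : ι → Ω → ℝ}
    (hint : ∀ T : Finset ι, Integrable (fun ω => ∏ i ∈ T, Y i ω) μ)
    (hneg : ∀ T : Finset ι, ∫ ω, ∏ i ∈ T, Y i ω ∂μ ≤ ∏ i ∈ T, ∫ ω, Y i ω ∂μ)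
    {d c : ℝ} (hd : 0 ≤ d) (hc : 0 ≤ c) :
    ∫ ω, ∏ i, (d * Y i ω + c) ∂μ ≤ ∏ i, (d * ∫ ω, Y i ω ∂μ + c) := by
  classical
  simp_rw [prod_mul_add_eq_sum_powerset]
  rw [integral_finsetSum _ fun T _ => (hint T).const_mul _]
  refine sum_le_sum fun T _ => ?_
  rw [integral_const_mul]
  gcongr
  exact hneg T

theorem mgf_sum_neg_le_of_negCorr_one_sub [Fintype ι] [IsProbabilityMeasure μ] {X : ι → Ω → ℝ}
    (hmeas : ∀ i, Measurable (X i)) (h01 : ∀ i ω, X i ω = 0 ∨ X i ω = 1)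
    (hneg : ∀ T : Finset ι,
      ∫ ω, ∏ i ∈ T, (1 - X i ω) ∂μ ≤ ∏ i ∈ T, ∫ ω, (1 - X i ω) ∂μ)
    {t : ℝ} (ht : 0 ≤ t) :
    mgf (fun ω => ∑ i, X i ω) μ (-t) ≤ exp (-((1 - exp (-t)) * ∑ i, ∫ ω, X i ω ∂μ)) := by
  set d := 1 - exp (-t) with hd_def
  have hd : 0 ≤ d := sub_nonneg.2 (exp_le_one_iff.2 (neg_nonpos.2 ht))
  have hX : ∀ i ω, |X i ω| ≤ 1 := fun i ω => by rcases h01 i ω with h | h <;> simp [h]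
  have hY : ∀ i ω, |1 - X i ω| ≤ 1 := fun i ω => by rcases h01 i ω with h | h <;> simp [h]
  have hint := integrable_prod_of_abs_le_one (μ := μ) (fun i => (hmeas i).const_sub 1) hY
  have hmean : ∀ i, ∫ ω, (1 - X i ω) ∂μ = 1 - ∫ ω, X i ω ∂μ := fun i => by
    have hintX : Integrable (X i) μ := by
      simpa using integrable_prod_of_abs_le_one hmeas hX {i}
    rw [integral_sub (integrable_const 1) hintX, integral_const, probReal_univ, one_smul]
  have hprod : ∀ ω, exp (-t * ∑ i, X i ω) = ∏ i, (d * (1 - X i ω) + exp (-t)) := fun ω => by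
    rw [mul_sum, exp_sum]
    exact prod_congr rfl fun i _ => exp_neg_mul_of_eq_zero_or_one (h01 i ω) t
  calc mgf (fun ω => ∑ i, X i ω) μ (-t)
      = ∫ ω, ∏ i, (d * (1 - X i ω) + exp (-t)) ∂μ := by simp_rw [mgf, hprod]
    _ ≤ ∏ i, (d * ∫ ω, (1 - X i ω) ∂μ + exp (-t)) :=
      integral_prod_mul_add_le_of_negCorr hint hneg hd (exp_pos _).le
    _ ≤ ∏ i, exp (-(d * ∫ ω, X i ω ∂μ)) := by
      refine prod_le_prod (fun i _ => ?_) fun i _ => ?_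
      · refine add_nonneg (mul_nonneg hd (integral_nonneg fun ω => ?_)) (exp_pos _).le
        rcases h01 i ω with h | h <;> simp [h]
      · rw [hmean]
        linarith [one_sub_le_exp_neg (d * ∫ ω, X i ω ∂μ)]
    _ = exp (-(d * ∑ i, ∫ ω, X i ω ∂μ)) := by
      rw [← exp_sum, sum_neg_distrib, mul_sum]

theorem integral_eq_measureReal_of_eq_zero_or_one {X : Ω → ℝ} (hmeas : Measurable X)
    (h01 : ∀ ω, X ω = 0 ∨ X ω = 1) : ∫ ω, X ω ∂μ = μ.real {ω | X ω = 1} := by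
  have hX : X = Set.indicator {ω | X ω = 1} 1 := by
    ext ω
    rcases h01 ω with h | h <;> simp [h]
  have hset : MeasurableSet {ω | X ω = 1} := hmeas (measurableSet_singleton 1)
  rw [← integral_indicator_one hset, ← hX]

end

theorem negCorr_chernoff_lower_tail_general
    {Ω : Type*} [MeasurableSpace Ω] (μ : Measure Ω) [IsProbabilityMeasure μ]
    (n : ℕ) (X : Fin n → Ω → ℝ)
    (hmeas : ∀ i, Measurable (X i))
    (h01 : ∀ i ω, X i ω = 0 ∨ X i ω = 1)
    (hneg' : ∀ S : Finset (Fin n),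
      (∫ ω, ∏ i ∈ S, (1 - X i ω) ∂μ) ≤ ∏ i ∈ S, ∫ ω, (1 - X i ω) ∂μ)
    (p : ℝ)
    (hp : p = (1 / n) * ∑ i, (μ {ω | X i ω = 1}).toReal)
    (lam : ℝ) (hlam : 0 < lam) :
    (μ {ω | ∑ i, X i ω < p * n - lam}).toReal ≤ Real.exp (-lam ^ 2 / (2 * p * n)) := by
  have hsum_nonneg : ∀ ω, 0 ≤ ∑ i, X i ω := fun ω =>
    sum_nonneg fun i _ => by rcases h01 i ω with h | h <;> simp [h]
  have hpn : p * n = ∑ i, ∫ ω, X i ω ∂μ := by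
    simp_rw [integral_eq_measureReal_of_eq_zero_or_one (hmeas _) (h01 _)]
    rcases Nat.eq_zero_or_pos n with rfl | hn
    · simp
    · rw [hp]; field_simp; rfl
  rcases le_or_gt (p * n) 0 with hpn_nonpos | hpn_pos
  · have hempty : {ω | ∑ i, X i ω < p * n - lam} = ∅ :=
      Set.eq_empty_of_forall_notMem fun ω hω => by linarith [hsum_nonneg ω, hω.out]
    simp [hempty, (exp_pos _).le]
  set t := lam / (p * n)
  have ht : 0 ≤ t := div_nonneg hlam.le hpn_pos.le
  have hint : Integrable (fun ω => exp (-t * ∑ i, X i ω)) μ :=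
    .of_bound (by fun_prop) 1 (.of_forall fun ω => by
      rw [Real.norm_eq_abs, abs_of_pos (exp_pos _), exp_le_one_iff]
      nlinarith [hsum_nonneg ω])
  calc μ.real {ω | ∑ i, X i ω < p * n - lam}
      ≤ μ.real {ω | ∑ i, X i ω ≤ p * n - lam} := measureReal_mono fun ω hω => hω.out.le
    _ ≤ exp (- -t * (p * n - lam)) * mgf (fun ω => ∑ i, X i ω) μ (-t) :=
      measure_le_le_exp_mul_mgf _ (neg_nonpos.2 ht) hint
    _ ≤ exp (t * (p * n - lam)) * exp (-((1 - exp (-t)) * (p * n))) := by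
      rw [neg_neg, hpn]
      gcongr
      exact mgf_sum_neg_le_of_negCorr_one_sub hmeas h01 hneg' ht
    _ ≤ exp (-lam ^ 2 / (2 * p * n)) := by
      rw [← exp_add, mul_assoc 2]
      exact exp_le_exp.2 (by linarith [chernoff_exponent_le hpn_pos hlam.le])

/-- Chernoff-type lower tail bound for sums of 0-1 random variables such that
both `{Xᵢ}` and `{1 - Xᵢ}` are negatively correlated families. -/
theorem negCorr_chernoff_lower_tail
    {Ω : Type*} [MeasurableSpace Ω] (μ : Measure Ω) [IsProbabilityMeasure μ]
    (n : ℕ) (hn : 0 < n) (X : Fin n → Ω → ℝ)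
    (hmeas : ∀ i, Measurable (X i))
    (h01 : ∀ i ω, X i ω = 0 ∨ X i ω = 1)
    (hneg : ∀ S : Finset (Fin n),
      (∫ ω, ∏ i ∈ S, X i ω ∂μ) ≤ ∏ i ∈ S, ∫ ω, X i ω ∂μ)
    (hneg' : ∀ S : Finset (Fin n),
      (∫ ω, ∏ i ∈ S, (1 - X i ω) ∂μ) ≤ ∏ i ∈ S, ∫ ω, (1 - X i ω) ∂μ)
    (p : ℝ)
    (hp : p = (1 / n) * ∑ i, (μ {ω | X i ω = 1}).toReal)
    (lam : ℝ) (hlam : 0 < lam) :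
    (μ {ω | ∑ i, X i ω < p * n - lam}).toReal ≤ Real.exp (-lam ^ 2 / (2 * p * n)) :=
  negCorr_chernoff_lower_tail_general μ n X hmeas h01 hneg' p hp lam hlam
end

section
/- Let G be a d-regular connected graph on n vertices and let U be the union of k independent uniformly random spanning trees of G. Suppose for each tree T and each set A ⊆ V the cut edge indicators are negatively correlated with marginals at least 1/d. Then for every A ⊆ V, P[|δ_U(A)| < |δ_G(A)|/(2d)] < exp(-k|δ_G(A)|/(8d²)). -/
open MeasureTheory ProbabilityTheory Finset
open scoped Classical

/-- The set of spanning trees of a graph `G` on a finite vertex set. -/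
noncomputable def spanningTrees {V : Type*} [Fintype V] [DecidableEq V]
    (G : SimpleGraph V) : Finset (SimpleGraph V) :=
  Finset.univ.filter (fun T => T ≤ G ∧ T.IsTree)

/-- `δ_H(A)`: the set of (ordered) edges of `H` leaving `A`. -/
noncomputable def edgeCut {V : Type*} [Fintype V] [DecidableEq V]
    (H : SimpleGraph V) (A : Finset V) : Finset (V × V) :=
  Finset.univ.filter (fun p => H.Adj p.1 p.2 ∧ p.1 ∈ A ∧ p.2 ∉ A)

/-!
If the union `U` has a small cut then so does every tree, so by independence it suffices to
bound, for one uniform spanning tree `T`, the probability that `|δ_T(A)| < m / (2d)`, where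
`m = |δ_G(A)|`. Uniformity turns every probability and integral about `T` into a count over the
finite set of spanning trees. With `Y` the number of edges of `δ_G(A)` missed by `T`, expanding
`2 ^ Y = ∑_{S ⊆ δ_G(A) \ T} 1` and using negative correlation of the complements gives
`E[2 ^ Y] ≤ ∏_e (1 + P[e ∉ T]) ≤ (2 - 1/d) ^ m`, and Markov's inequality for `2 ^ Y` together
with `log 2 < 3/4` bounds the single-tree probability strictly by `exp (-m / (8d))`.
-/

theorem MeasureTheory.nullMeasurableSet_of_measure_add_measure_compl_le
    {Ω : Type*} [MeasurableSpace Ω] {μ : Measure Ω} [IsFiniteMeasure μ] {s : Set Ω}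
    (h : μ s + μ sᶜ ≤ μ Set.univ) : NullMeasurableSet s μ := by
  set t := toMeasurable μ sᶜ
  have ht : MeasurableSet t := measurableSet_toMeasurable μ sᶜ
  have htc : tᶜ ⊆ s := Set.compl_subset_comm.mp (subset_toMeasurable μ sᶜ)
  have hinter : μ (s ∩ t) = 0 := by
    have hsplit : μ (s ∩ t) + μ tᶜ = μ s := by
      rw [← measure_inter_add_sdiff s ht, Set.sdiff_eq, Set.inter_eq_right.mpr htc]
    have hcompl : μ t + μ tᶜ = μ Set.univ := measure_add_measure_compl ht
    rw [measure_toMeasurable] at hcompl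
    have : μ (s ∩ t) + (μ tᶜ + μ sᶜ) ≤ 0 + (μ tᶜ + μ sᶜ) := by
      rw [← add_assoc, hsplit, zero_add, add_comm (μ tᶜ), hcompl]
      exact h
    exact nonpos_iff_eq_zero.mp ((ENNReal.add_le_add_iff_right (by finiteness)).mp this)
  refine ht.compl.nullMeasurableSet.congr ?_
  rw [ae_eq_set]
  constructor
  · simp [Set.sdiff_eq_empty.mpr htc]
  · simpa [Set.sdiff_eq] using hinter

section UniformRandomElement

variable {Ω α : Type*} [MeasurableSpace Ω] {μ : Measure Ω} {X : Ω → α} {s : Finset α}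

theorem measure_preimage_le_of_uniform (hmem : ∀ ω, X ω ∈ s)
    (hunif : ∀ a ∈ s, μ {ω | X ω = a} = 1 / (#s : ENNReal)) (Q : α → Prop) [DecidablePred Q] :
    μ {ω | Q (X ω)} ≤ #{a ∈ s | Q a} / #s := by
  calc μ {ω | Q (X ω)} ≤ μ (⋃ a ∈ {a ∈ s | Q a}, {ω | X ω = a}) :=
        measure_mono fun ω hω => Set.mem_biUnion (mem_filter.mpr ⟨hmem ω, hω⟩) rfl
    _ ≤ ∑ a ∈ {a ∈ s | Q a}, μ {ω | X ω = a} := measure_biUnion_finset_le _ _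
    _ = #{a ∈ s | Q a} / #s := by
        rw [sum_congr rfl fun a ha => hunif a (mem_filter.mp ha).1, sum_const, nsmul_eq_mul,
          mul_one_div]

variable [IsProbabilityMeasure μ] (hmem : ∀ ω, X ω ∈ s)
  (hunif : ∀ a ∈ s, μ {ω | X ω = a} = 1 / (#s : ENNReal))
include hmem hunif

theorem nullMeasurableSet_fiber_of_uniform {a : α} (ha : a ∈ s) :
    NullMeasurableSet {ω | X ω = a} μ := by
  refine nullMeasurableSet_of_measure_add_measure_compl_le ?_
  have hs : (#s : ENNReal) ≠ 0 := by simpa using ne_empty_of_mem ha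
  have hcompl := measure_preimage_le_of_uniform hmem hunif (· ≠ a)
  rw [filter_ne' s a, card_erase_of_mem ha] at hcompl
  calc μ {ω | X ω = a} + μ {ω | X ω = a}ᶜ ≤ 1 / #s + ((#s - 1 : ℕ) : ENNReal) / #s :=
        add_le_add (hunif a ha).le hcompl
    _ = μ Set.univ := by
        rw [ENNReal.div_add_div_same, measure_univ, ← Nat.cast_one (R := ENNReal), ← Nat.cast_add,
          Nat.add_sub_cancel' (card_pos.mpr ⟨a, ha⟩), ENNReal.div_self hs (by simp), Nat.cast_one]

theorem measureReal_preimage_le_of_uniform (Q : α → Prop) [DecidablePred Q] :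
    μ.real {ω | Q (X ω)} ≤ #{a ∈ s | Q a} / #s := by
  obtain ⟨ω⟩ := nonempty_of_isProbabilityMeasure μ
  have hs : (0 : ℝ) < #s := by exact_mod_cast card_pos.mpr ⟨X ω, hmem ω⟩
  refine ENNReal.toReal_le_of_le_ofReal (by positivity) ?_
  rw [ENNReal.ofReal_div_of_pos hs, ENNReal.ofReal_natCast, ENNReal.ofReal_natCast]
  exact measure_preimage_le_of_uniform hmem hunif Q

theorem integral_comp_of_uniform (g : α → ℝ) :
    ∫ ω, g (X ω) ∂μ = (∑ a ∈ s, g a) / #s := by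
  have hfib := fun a (ha : a ∈ s) => nullMeasurableSet_fiber_of_uniform hmem hunif ha
  have hsum : (fun ω => g (X ω)) = fun ω => ∑ a ∈ s, {ω | X ω = a}.indicator (fun _ => g a) ω := by
    ext ω
    simp [Set.indicator_apply, hmem ω]
  rw [hsum, integral_finsetSum s fun a ha => (integrable_const (g a)).indicator₀ (hfib a ha),
    sum_div]
  refine sum_congr rfl fun a ha => ?_
  rw [integral_indicator₀ (hfib a ha), setIntegral_const, smul_eq_mul, measureReal_def, hunif a ha]
  simp [div_eq_inv_mul]

theorem integral_indicator_comp_of_uniform (Q : α → Prop) [DecidablePred Q] :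
    ∫ ω, (if Q (X ω) then (1 : ℝ) else 0) ∂μ = #{a ∈ s | Q a} / #s := by
  rw [integral_comp_of_uniform hmem hunif fun a => if Q a then (1 : ℝ) else 0, sum_boole]

theorem integral_one_sub_indicator_comp_of_uniform (Q : α → Prop) [DecidablePred Q] :
    ∫ ω, (1 - if Q (X ω) then (1 : ℝ) else 0) ∂μ = #{a ∈ s | ¬Q a} / #s := by
  have hsub : ∀ a, (1 - if Q a then (1 : ℝ) else 0) = if ¬Q a then 1 else 0 := fun a => by
    split_ifs <;> simp_all
  simp only [hsub]
  exact integral_indicator_comp_of_uniform hmem hunif (fun a => ¬Q a)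

theorem integral_prod_one_sub_indicator_of_uniform {ι : Type*} (P : α → ι → Prop)
    [∀ a i, Decidable (P a i)] (S : Finset ι) :
    ∫ ω, ∏ i ∈ S, (1 - if P (X ω) i then (1 : ℝ) else 0) ∂μ = #{a ∈ s | ∀ i ∈ S, ¬P a i} / #s := by
  have hprod : ∀ a, ∏ i ∈ S, (1 - if P a i then (1 : ℝ) else 0) =
      if ∀ i ∈ S, ¬P a i then 1 else 0 := by
    intro a
    rw [← prod_boole]
    exact prod_congr rfl fun i _ => by split_ifs <;> simp_all
  simp only [hprod]
  exact integral_indicator_comp_of_uniform hmem hunif (fun a => ∀ i ∈ S, ¬P a i)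

end UniformRandomElement

theorem measure_iInter_preimage_le_of_iIndepFun_uniform {Ω α ι : Type*} [MeasurableSpace Ω]
    {μ : Measure Ω} [IsProbabilityMeasure μ] [Fintype ι] {X : ι → Ω → α} {s : Finset α}
    (hindep : iIndepFun (m := fun _ => (⊤ : MeasurableSpace α)) X μ) (hmem : ∀ i ω, X i ω ∈ s)
    (hunif : ∀ i, ∀ a ∈ s, μ {ω | X i ω = a} = 1 / (#s : ENNReal))
    (Q : α → Prop) [DecidablePred Q] :
    μ (⋂ i, {ω | Q (X i ω)}) ≤ ENNReal.ofReal (((#{a ∈ s | Q a} : ℝ) / #s) ^ Fintype.card ι) := by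
  rw [hindep.meas_iInter (s := fun i => {ω | Q (X i ω)}) fun i => ⟨{a | Q a}, trivial, rfl⟩,
    ENNReal.ofReal_pow (by positivity), ← card_univ, ← prod_const]
  refine prod_le_prod' fun i _ => ?_
  rw [← ofReal_measureReal]
  exact ENNReal.ofReal_le_ofReal (measureReal_preimage_le_of_uniform (hmem i) (hunif i) Q)

theorem two_sub_pow_lt_exp_mul_two_rpow {p : ℝ} (hp0 : 0 < p) (hp2 : p ≤ 2) {m : ℕ}
    (hm : 0 < m) : (2 - p) ^ m < Real.exp (-(p * m / 8)) * 2 ^ (m - p * m / 2) := by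
  have hbound : (1 - p / 2) ^ m ≤ Real.exp (-(p * m / 2)) := by
    rw [show -(p * m / 2) = m * -(p / 2) by ring, Real.exp_nat_mul]
    exact pow_le_pow_left₀ (by linarith) (by linarith [Real.add_one_le_exp (-(p / 2))]) m
  have hfactor : (2 - p) ^ m = Real.exp (Real.log 2 * m) * (1 - p / 2) ^ m := by
    rw [← Real.rpow_def_of_pos two_pos, Real.rpow_natCast, ← mul_pow]
    ring
  have hexponent : Real.log 2 * m - p * m / 2 < -(p * m / 8) + Real.log 2 * (m - p * m / 2) := by
    have hpm : 0 < p * m := by positivity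
    nlinarith [Real.log_two_lt_d9]
  calc (2 - p) ^ m = Real.exp (Real.log 2 * m) * (1 - p / 2) ^ m := hfactor
    _ ≤ Real.exp (Real.log 2 * m) * Real.exp (-(p * m / 2)) := by gcongr
    _ < Real.exp (-(p * m / 8)) * Real.exp (Real.log 2 * (m - p * m / 2)) := by
        rw [← Real.exp_add, ← Real.exp_add, Real.exp_lt_exp]
        linarith
    _ = Real.exp (-(p * m / 8)) * 2 ^ (m - p * m / 2) := by rw [Real.rpow_def_of_pos two_pos]

theorem pow_lt_exp_neg_mul_div_sq {r m d : ℝ} {k : ℕ} (hr : 0 ≤ r)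
    (hrm : r < Real.exp (-(m / (8 * d)))) (hk : k ≠ 0) (hd : 1 ≤ d) (hm : 0 ≤ m) :
    r ^ k < Real.exp (-(k * m) / (8 * d ^ 2)) :=
  calc r ^ k < Real.exp (-(m / (8 * d))) ^ k := pow_lt_pow_left₀ hrm hr hk
    _ = Real.exp (-(k * m) / (8 * d)) := by rw [← Real.exp_nat_mul]; ring_nf
    _ ≤ Real.exp (-(k * m) / (8 * d ^ 2)) := by
        rw [Real.exp_le_exp, neg_div, neg_div, neg_le_neg_iff]
        gcongr
        nlinarith

section NegativelyCorrelatedCounts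

variable {α ι : Type*} {s : Finset α} {C : Finset ι} (P : α → ι → Prop) [∀ a i, Decidable (P a i)]

theorem sum_two_pow_card_filter_not_eq :
    ∑ a ∈ s, (2 : ℝ) ^ #{i ∈ C | ¬P a i} = ∑ S ∈ C.powerset, (#{a ∈ s | ∀ i ∈ S, ¬P a i} : ℝ) := by
  have hpow : ∀ a, (2 : ℝ) ^ #{i ∈ C | ¬P a i} = ∏ i ∈ C, (1 + if ¬P a i then 1 else 0) := by
    intro a
    have hterm : ∀ i, (1 + if ¬P a i then (1 : ℝ) else 0) = if ¬P a i then 2 else 1 := by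
      intro i
      split_ifs <;> norm_num
    rw [prod_congr rfl fun i _ => hterm i, prod_ite, prod_const, prod_const_one, mul_one]
  simp only [hpow, prod_one_add, prod_boole]
  rw [sum_comm]
  simp

variable {P} {p : ℝ}
  (hneg : ∀ S ⊆ C,
    (#{a ∈ s | ∀ i ∈ S, ¬P a i} : ℝ) / #s ≤ ∏ i ∈ S, (#{a ∈ s | ¬P a i} : ℝ) / #s)
  (hmarg : ∀ i ∈ C, p ≤ (#{a ∈ s | P a i} : ℝ) / #s)
include hneg hmarg

theorem sum_two_pow_card_filter_not_le :
    ∑ a ∈ s, (2 : ℝ) ^ #{i ∈ C | ¬P a i} ≤ #s * (2 - p) ^ #C := by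
  obtain rfl | hs := s.eq_empty_or_nonempty
  · simp
  have hN : (0 : ℝ) < #s := by exact_mod_cast hs.card_pos
  set q := fun i => (#{a ∈ s | ¬P a i} : ℝ) / #s
  have hq : ∀ i ∈ C, 1 + q i ≤ 2 - p := by
    intro i hi
    have hcard : (#{a ∈ s | P a i} : ℝ) + #{a ∈ s | ¬P a i} = #s := by
      exact_mod_cast card_filter_add_card_filter_not _
    have hq_eq : q i = 1 - (#{a ∈ s | P a i} : ℝ) / #s := by
      simp only [q]
      field_simp
      linarith
    linarith [hmarg i hi]
  calc ∑ a ∈ s, (2 : ℝ) ^ #{i ∈ C | ¬P a i}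
      = ∑ S ∈ C.powerset, (#{a ∈ s | ∀ i ∈ S, ¬P a i} : ℝ) := sum_two_pow_card_filter_not_eq P
    _ ≤ ∑ S ∈ C.powerset, #s * ∏ i ∈ S, q i :=
        sum_le_sum fun S hS => (div_le_iff₀' hN).mp (hneg S (mem_powerset.mp hS))
    _ = #s * ∏ i ∈ C, (1 + q i) := by rw [← mul_sum, prod_one_add]
    _ ≤ #s * (2 - p) ^ #C := by
        rw [← prod_const]
        gcongr with i hi
        exact hq i hi

theorem card_filter_card_lt_mul_two_rpow_le (t : ℝ) :
    #{a ∈ s | (#{i ∈ C | P a i} : ℝ) < t} * (2 : ℝ) ^ (#C - t) ≤ #s * (2 - p) ^ #C := by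
  have hmiss : ∀ a ∈ s, (#{i ∈ C | P a i} : ℝ) < t →
      (2 : ℝ) ^ (#C - t) ≤ 2 ^ #{i ∈ C | ¬P a i} := by
    intro a _ ha
    have hcard : (#{i ∈ C | P a i} : ℝ) + #{i ∈ C | ¬P a i} = #C := by
      exact_mod_cast card_filter_add_card_filter_not _
    rw [← Real.rpow_natCast]
    exact Real.rpow_le_rpow_of_exponent_le one_le_two (by linarith)
  calc #{a ∈ s | (#{i ∈ C | P a i} : ℝ) < t} * (2 : ℝ) ^ (#C - t)
      = ∑ a ∈ s with (#{i ∈ C | P a i} : ℝ) < t, (2 : ℝ) ^ (#C - t) := by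
        rw [sum_const, nsmul_eq_mul]
    _ ≤ ∑ a ∈ s with (#{i ∈ C | P a i} : ℝ) < t, (2 : ℝ) ^ #{i ∈ C | ¬P a i} :=
        sum_le_sum fun a ha => hmiss a (mem_filter.mp ha).1 (mem_filter.mp ha).2
    _ ≤ ∑ a ∈ s, (2 : ℝ) ^ #{i ∈ C | ¬P a i} :=
        sum_le_sum_of_subset_of_nonneg (filter_subset _ _) fun _ _ _ => by positivity
    _ ≤ #s * (2 - p) ^ #C := sum_two_pow_card_filter_not_le hneg hmarg

theorem card_filter_card_lt_div_card_lt_exp (hp0 : 0 < p) (hp2 : p ≤ 2) (hC : C.Nonempty) :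
    (#{a ∈ s | (#{i ∈ C | P a i} : ℝ) < p * #C / 2} : ℝ) / #s < Real.exp (-(p * #C / 8)) := by
  obtain rfl | hs := s.eq_empty_or_nonempty
  · simpa using Real.exp_pos _
  have hN : (0 : ℝ) < #s := by exact_mod_cast hs.card_pos
  rw [div_lt_iff₀ hN]
  refine lt_of_mul_lt_mul_right ?_ (by positivity : (0 : ℝ) ≤ 2 ^ (#C - p * #C / 2))
  calc #{a ∈ s | (#{i ∈ C | P a i} : ℝ) < p * #C / 2} * (2 : ℝ) ^ (#C - p * #C / 2)
      ≤ #s * (2 - p) ^ #C := card_filter_card_lt_mul_two_rpow_le hneg hmarg _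
    _ < #s * (Real.exp (-(p * #C / 8)) * 2 ^ (#C - p * #C / 2)) := by
        gcongr
        exact two_sub_pow_lt_exp_mul_two_rpow hp0 hp2 hC.card_pos
    _ = Real.exp (-(p * #C / 8)) * #s * 2 ^ (#C - p * #C / 2) := by ring

end NegativelyCorrelatedCounts

section SpanningTreeCuts

variable {V : Type*} [Fintype V] [DecidableEq V] {G : SimpleGraph V} {A : Finset V}

theorem edgeCut_mono {H H' : SimpleGraph V} (h : H ≤ H') : edgeCut H A ⊆ edgeCut H' A := by
  intro e he
  simp only [edgeCut, mem_filter, mem_univ, true_and] at he ⊢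
  exact ⟨h he.1, he.2⟩

theorem edgeCut_eq_filter_of_le {T : SimpleGraph V} (h : T ≤ G) :
    edgeCut T A = {e ∈ edgeCut G A | T.Adj e.1 e.2} := by
  ext e
  simp only [edgeCut, mem_filter, mem_univ, true_and]
  exact ⟨fun he => ⟨⟨h he.1, he.2⟩, he.1⟩, fun he => ⟨he.2, he.1.2⟩⟩

theorem card_filter_spanningTrees_div_lt_exp {Ω : Type*} [MeasurableSpace Ω] {μ : Measure Ω}
    [IsProbabilityMeasure μ] {X : Ω → SimpleGraph V} (hmem : ∀ ω, X ω ∈ spanningTrees G)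
    (hunif : ∀ T ∈ spanningTrees G, μ {ω | X ω = T} = 1 / ((spanningTrees G).card : ENNReal))
    (hneg : ∀ S ⊆ edgeCut G A,
      (∫ ω, ∏ e ∈ S, (1 - if (X ω).Adj e.1 e.2 then (1:ℝ) else 0) ∂μ) ≤
        ∏ e ∈ S, ∫ ω, (1 - if (X ω).Adj e.1 e.2 then (1:ℝ) else 0) ∂μ)
    {d : ℝ} (hmarg : ∀ e ∈ edgeCut G A, 1 / d ≤ (μ {ω | (X ω).Adj e.1 e.2}).toReal)
    (hd : 1 ≤ d) (hC : (edgeCut G A).Nonempty) :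
    (#{T ∈ spanningTrees G | (#(edgeCut T A) : ℝ) < #(edgeCut G A) / (2 * d)} : ℝ) /
      #(spanningTrees G) < Real.exp (-(#(edgeCut G A) / (8 * d))) := by
  have hcut : ∀ T ∈ spanningTrees G, #(edgeCut T A) = #{e ∈ edgeCut G A | T.Adj e.1 e.2} :=
    fun T hT => by rw [edgeCut_eq_filter_of_le (mem_filter.mp hT).2.1]
  rw [filter_congr fun T hT => by rw [hcut T hT],
    show (#(edgeCut G A) : ℝ) / (2 * d) = 1 / d * #(edgeCut G A) / 2 by ring,
    show (#(edgeCut G A) : ℝ) / (8 * d) = 1 / d * #(edgeCut G A) / 8 by ring]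
  refine card_filter_card_lt_div_card_lt_exp (s := spanningTrees G) (C := edgeCut G A)
    (P := fun T e => T.Adj e.1 e.2) (fun S hS => ?_) (fun e he => ?_) (by positivity)
    (by linarith [(div_le_one₀ (by linarith : 0 < d)).mpr hd]) hC
  · have h := hneg S hS
    simp only [integral_prod_one_sub_indicator_of_uniform hmem hunif
      (fun (T : SimpleGraph V) (e : V × V) => T.Adj e.1 e.2)] at h
    rwa [prod_congr rfl fun e _ => integral_one_sub_indicator_comp_of_uniform hmem hunif
      (fun T : SimpleGraph V => T.Adj e.1 e.2)] at h
  · exact (hmarg e he).trans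
      (measureReal_preimage_le_of_uniform hmem hunif fun T : SimpleGraph V => T.Adj e.1 e.2)

end SpanningTreeCuts

theorem splicer_cut_lower_tail_general
    {V : Type*} [Fintype V] [DecidableEq V] (G : SimpleGraph V) (d : ℕ)
    (k : ℕ) (hk : 0 < k)
    {Ω : Type*} [MeasurableSpace Ω] (μ : Measure Ω) [IsProbabilityMeasure μ]
    (Tr : Fin k → Ω → SimpleGraph V)
    -- each `Tr i` is a uniformly random spanning tree of `G`:
    (hspan : ∀ i ω, Tr i ω ∈ spanningTrees G)
    (hunif : ∀ i, ∀ T ∈ spanningTrees G,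
      μ {ω | Tr i ω = T} = 1 / ((spanningTrees G).card : ENNReal))
    -- the `k` trees are mutually independent:
    (hindep : iIndepFun (m := fun _ => (⊤ : MeasurableSpace (SimpleGraph V))) Tr μ)
    (A : Finset V)
    -- negative correlation of cut edge indicators of each tree:
    (hneg' : ∀ i, ∀ S : Finset (V × V), S ⊆ edgeCut G A →
      (∫ ω, ∏ p ∈ S, (1 - if (Tr i ω).Adj p.1 p.2 then (1:ℝ) else 0) ∂μ) ≤
        ∏ p ∈ S, ∫ ω, (1 - if (Tr i ω).Adj p.1 p.2 then (1:ℝ) else 0) ∂μ)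
    -- marginals at least `1/d`:
    (hmarg : ∀ i, ∀ p ∈ edgeCut G A,
      (1 : ℝ) / d ≤ (μ {ω | (Tr i ω).Adj p.1 p.2}).toReal) :
    μ {ω | ((edgeCut (⨆ i, Tr i ω) A).card : ℝ) < ((edgeCut G A).card : ℝ) / (2 * d)}
      < ENNReal.ofReal
          (Real.exp (-(k * ((edgeCut G A).card : ℝ)) / (8 * (d : ℝ) ^ 2))) := by
  set C := edgeCut G A
  set small := fun T : SimpleGraph V => (#(edgeCut T A) : ℝ) < #C / (2 * d)
  rcases le_or_gt ((#C : ℝ) / (2 * d)) 0 with hτ | hτ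
  · have hempty : {ω | small (⨆ i, Tr i ω)} = ∅ :=
      Set.eq_empty_of_forall_notMem fun ω hω => (hω.trans_le hτ).not_ge (Nat.cast_nonneg _)
    rw [hempty, measure_empty]
    exact ENNReal.ofReal_pos.mpr (Real.exp_pos _)
  have hd : (1 : ℝ) ≤ d := by
    rcases Nat.eq_zero_or_pos d with h | h
    · simp [h] at hτ
    · exact_mod_cast h
  have hC : C.Nonempty := nonempty_iff_ne_empty.mpr fun h => by simp [h] at hτ
  set r := (#{T ∈ spanningTrees G | small T} : ℝ) / #(spanningTrees G)
  have htree : r < Real.exp (-(#C / (8 * d))) :=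
    card_filter_spanningTrees_div_lt_exp (hspan ⟨0, hk⟩) (hunif ⟨0, hk⟩) (hneg' ⟨0, hk⟩)
      (hmarg ⟨0, hk⟩) hd hC
  calc μ {ω | small (⨆ i, Tr i ω)}
      ≤ μ (⋂ i, {ω | small (Tr i ω)}) := measure_mono fun ω hω => Set.mem_iInter.mpr fun i =>
        show small (Tr i ω) from
          (Nat.cast_le.mpr (card_le_card (edgeCut_mono (le_iSup (Tr · ω) i)))).trans_lt hω
    _ ≤ ENNReal.ofReal (r ^ k) := by
        simpa using measure_iInter_preimage_le_of_iIndepFun_uniform hindep hspan hunif small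
    _ < ENNReal.ofReal (Real.exp (-(k * (#C : ℝ)) / (8 * (d : ℝ) ^ 2))) :=
        (ENNReal.ofReal_lt_ofReal_iff (Real.exp_pos _)).mpr
          (pow_lt_exp_neg_mul_div_sq (by positivity) htree hk.ne' hd (by positivity))

/-- For a `d`-regular connected graph `G`, and `U` the union of `k` independent
uniformly random spanning trees of `G`, assuming negative correlation (of the cut edge
indicators and their complements) and marginals at least `1/d` for each tree, every cut
of `U` is at least `|δ_G(A)|/(2d)` except with probability less than
`exp(-k |δ_G(A)| / (8 d²))`. -/
theorem splicer_cut_lower_tail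
    {V : Type*} [Fintype V] [DecidableEq V] (G : SimpleGraph V) (d : ℕ) (hd : 0 < d)
    (hreg : G.IsRegularOfDegree d) (hG : G.Connected)
    (k : ℕ) (hk : 0 < k)
    {Ω : Type*} [MeasurableSpace Ω] (μ : Measure Ω) [IsProbabilityMeasure μ]
    (Tr : Fin k → Ω → SimpleGraph V)
    -- each `Tr i` is a uniformly random spanning tree of `G`:
    (hspan : ∀ i ω, Tr i ω ∈ spanningTrees G)
    (hunif : ∀ i, ∀ T ∈ spanningTrees G,
      μ {ω | Tr i ω = T} = 1 / ((spanningTrees G).card : ENNReal))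
    -- the `k` trees are mutually independent:
    (hindep : iIndepFun (m := fun _ => (⊤ : MeasurableSpace (SimpleGraph V))) Tr μ)
    (A : Finset V)
    -- negative correlation of cut edge indicators of each tree:
    (hneg : ∀ i, ∀ S : Finset (V × V), S ⊆ edgeCut G A →
      (∫ ω, ∏ p ∈ S, (if (Tr i ω).Adj p.1 p.2 then (1:ℝ) else 0) ∂μ) ≤
        ∏ p ∈ S, ∫ ω, (if (Tr i ω).Adj p.1 p.2 then (1:ℝ) else 0) ∂μ)
    (hneg' : ∀ i, ∀ S : Finset (V × V), S ⊆ edgeCut G A →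
      (∫ ω, ∏ p ∈ S, (1 - if (Tr i ω).Adj p.1 p.2 then (1:ℝ) else 0) ∂μ) ≤
        ∏ p ∈ S, ∫ ω, (1 - if (Tr i ω).Adj p.1 p.2 then (1:ℝ) else 0) ∂μ)
    -- marginals at least `1/d`:
    (hmarg : ∀ i, ∀ p ∈ edgeCut G A,
      (1 : ℝ) / d ≤ (μ {ω | (Tr i ω).Adj p.1 p.2}).toReal) :
    μ {ω | ((edgeCut (⨆ i, Tr i ω) A).card : ℝ) < ((edgeCut G A).card : ℝ) / (2 * d)}
      < ENNReal.ofReal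
          (Real.exp (-(k * ((edgeCut G A).card : ℝ)) / (8 * (d : ℝ) ^ 2))) :=
  splicer_cut_lower_tail_general G d k hk μ Tr hspan hunif hindep A hneg' hmarg
end

section
/- For 0 < p ≤ 1, the three quantities q_2 = (-p - 2√(1-p) + 2)/p, q_1 = (p + √(1-p) - 1)/p (taken twice) are nonnegative and satisfy q_2 + 2q_1 = 1; moreover, if each undirected edge of a G(n,p) random graph is independently replaced by both directed edges with probability q_2 and by a single directed edge in each direction with probability q_1 each, then each directed edge is present with probability q = 1 - √(1-p), independently across directed edges, and p/2 ≤ q ≤ p. -/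
/-!
Put `s = √(1-p)` and `q = 1 - s`, so that `1 - p = (1 - q)²`. The numerators of `q₂` and `q₁`
are then `q²` and `q(1-q)`, whose sum `q² + 2q(1-q) = 1 - (1-q)²` is `p`; and `p = q(1 + s)`
with `1 ≤ 1 + s ≤ 2` gives `p/2 ≤ q ≤ p`.
-/

section

variable {p s : ℝ}

lemma neg_sub_two_mul_add_two_eq_mul_self (hs : s ^ 2 = 1 - p) :
    -p - 2 * s + 2 = (1 - s) * (1 - s) := by
  linear_combination -hs

lemma add_sub_one_eq_mul_one_sub (hs : s ^ 2 = 1 - p) :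
    p + s - 1 = (1 - s) * (1 - (1 - s)) := by
  linear_combination hs

lemma one_sub_eq_mul_self_one_sub (hs : s ^ 2 = 1 - p) :
    1 - p = (1 - (1 - s)) * (1 - (1 - s)) := by
  linear_combination -hs

lemma half_le_one_sub (hs : s ^ 2 = 1 - p) (hs1 : s ≤ 1) : p / 2 ≤ 1 - s := by
  nlinarith

lemma one_sub_le (hs : s ^ 2 = 1 - p) (hs0 : 0 ≤ s) (hs1 : s ≤ 1) : 1 - s ≤ p := by
  nlinarith

end

/-- Properties of the edge-direction randomization in Process `B_p`: the probabilities
`q₂ = (-p - 2√(1-p) + 2)/p` (both directions) and `q₁ = (p + √(1-p) - 1)/p` (each single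
direction) are nonnegative and sum to one; moreover the resulting joint distribution of
the two directed edges coincides with two independent Bernoulli(`q`) coins where
`q = 1 - √(1-p)` (i.e. `p·q₂ = q²`, `p·q₁ = q(1-q)`, `1-p = (1-q)²`), and
`p/2 ≤ q ≤ p`. -/
theorem directed_randomization_properties (p : ℝ) (hp0 : 0 < p) (hp1 : p ≤ 1) :
    let q₂ : ℝ := (-p - 2 * Real.sqrt (1 - p) + 2) / p
    let q₁ : ℝ := (p + Real.sqrt (1 - p) - 1) / p
    let q : ℝ := 1 - Real.sqrt (1 - p)
    0 ≤ q₂ ∧ 0 ≤ q₁ ∧ q₂ + 2 * q₁ = 1 ∧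
      p * q₂ = q * q ∧ p * q₁ = q * (1 - q) ∧ 1 - p = (1 - q) * (1 - q) ∧
      p / 2 ≤ q ∧ q ≤ p := by
  intro q₂ q₁ q
  set s := Real.sqrt (1 - p)
  have hs : s ^ 2 = 1 - p := Real.sq_sqrt (by linarith)
  have hs0 : 0 ≤ s := Real.sqrt_nonneg _
  have hs1 : s ≤ 1 := Real.sqrt_le_one.mpr (by linarith)
  have hq₂ : q₂ = q * q / p := by rw [← neg_sub_two_mul_add_two_eq_mul_self hs]
  have hq₁ : q₁ = q * (1 - q) / p := by rw [← add_sub_one_eq_mul_one_sub hs]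
  have hq0 : 0 ≤ q := sub_nonneg.mpr hs1
  have hq1 : 0 ≤ 1 - q := by simp only [q, sub_sub_cancel]; exact hs0
  refine ⟨?_, ?_, ?_, ?_, ?_, one_sub_eq_mul_self_one_sub hs, half_le_one_sub hs hs1,
    one_sub_le hs hs0 hs1⟩
  · rw [hq₂]; positivity
  · rw [hq₁]; positivity
  · rw [mul_div_assoc', ← add_div, div_eq_one_iff_eq hp0.ne']; ring
  · rw [hq₂, mul_div_cancel₀ _ hp0.ne']
  · rw [hq₁, mul_div_cancel₀ _ hp0.ne']
end
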